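/- For every process r and trace s ∈ Act*: if r ⇓U s, then for every prefix s' of s with r ⟹̸✓^{s'} there exists a process p such that p Must ⊕(r afterU s'). -/

import Mathlib

namespace MTP

/-- Processes of infinitary CCS with success.
`pre none p` is `τ.p`, `pre (some a) p` is `a.p`.
`sum f` is a countable sum `Σ_{i∈I} p_i` where `I = {n | f n ≠ none}`. -/
inductive Proc (Act : Type) (Const : Type) : Type where
  | one : Proc Act Const
  | const : Const → Proc Act Const
  | pre : Option Act → Proc Act Const → Proc Act Const
  | sum : (ℕ → Option (Proc Act Const)) → Proc Act Const

namespace Proc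
/-- The empty sum `0`. -/
def nil {Act Const : Type} : Proc Act Const := .sum fun _ => none
/-- Binary external sum `p + q`. -/
def ext {Act Const : Type} (p q : Proc Act Const) : Proc Act Const :=
  .sum fun n => if n = 0 then some p else if n = 1 then some q else none
end Proc

/-- Labels: visible actions, τ, and the success action ✓. -/
inductive Label (Act : Type) : Type where
  | act : Act → Label Act
  | tau : Label Act
  | ok : Label Act

/-- A CCS signature: an involutive complementation on actions, together with
a definition for every constant. -/
structure CCS (Act : Type) (Const : Type) : Type where
  co : Act → Act
  co_invol : ∀ a, co (co a) = a
  defn : Const → Proc Act Const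

variable {Act Const : Type}

/-- The transition relation of infinitary CCS with success. -/
inductive Step (S : CCS Act Const) : Proc Act Const → Label Act → Proc Act Const → Prop where
  | one : Step S .one .ok .nil
  | preAct (a : Act) (p : Proc Act Const) : Step S (.pre (some a) p) (.act a) p
  | preTau (p : Proc Act Const) : Step S (.pre none p) .tau p
  | sum {f : ℕ → Option (Proc Act Const)} {i : ℕ} {p q : Proc Act Const} {l : Label Act} :
      f i = some p → Step S p l q → Step S (.sum f) l q
  | const {A : Const} {l : Label Act} {q : Proc Act Const} :
      Step S (S.defn A) l q → Step S (.const A) l q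

/-- `p` can report success. -/
def CanOk (S : CCS Act Const) (p : Proc Act Const) : Prop := ∃ q, Step S p .ok q

/-- `p` has no τ-transition. -/
def Stable (S : CCS Act Const) (p : Proc Act Const) : Prop := ¬ ∃ q, Step S p .tau q

/-- τ-transitions of a parallel composition `p ∥ r` (server component first). -/
inductive ParTau (S : CCS Act Const) :
    Proc Act Const × Proc Act Const → Proc Act Const × Proc Act Const → Prop where
  | left {p p' r : Proc Act Const} : Step S p .tau p' → ParTau S (p, r) (p', r)
  | right {p r r' : Proc Act Const} : Step S r .tau r' → ParTau S (p, r) (p, r')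
  | sync {p p' r r' : Proc Act Const} {a : Act} :
      Step S p (.act a) p' → Step S r (.act (S.co a)) r' → ParTau S (p, r) (p', r')

/-- A state of a composition is stuck if it has no τ-transition. -/
def StateStuck (S : CCS Act Const) (st : Proc Act Const × Proc Act Const) : Prop :=
  ¬ ∃ t, ParTau S st t

/-- `ρ` encodes a maximal computation: at each stage either a real τ-step is taken, or the
state is stuck and stutters forever (encoding a finite maximal computation). -/
def MaxComp (S : CCS Act Const) (ρ : ℕ → Proc Act Const × Proc Act Const) : Prop :=
  ∀ k, ParTau S (ρ k) (ρ (k + 1)) ∨ (StateStuck S (ρ k) ∧ ρ (k + 1) = ρ k)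

/-- `p Must r`: every maximal computation of `p ∥ r` is client-successful. -/
def Must (S : CCS Act Const) (p r : Proc Act Const) : Prop :=
  ∀ ρ : ℕ → Proc Act Const × Proc Act Const,
    ρ 0 = (p, r) → MaxComp S ρ → ∃ k, CanOk S (ρ k).2

/-- `p MustSC r`: every maximal computation of `p ∥ r` is successful (both components
eventually can report success). -/
def MustSC (S : CCS Act Const) (p r : Proc Act Const) : Prop :=
  ∀ ρ : ℕ → Proc Act Const × Proc Act Const,
    ρ 0 = (p, r) → MaxComp S ρ → (∃ k, CanOk S (ρ k).2) ∧ (∃ l, CanOk S (ρ l).1)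

/-- The server testing preorder `p ⊑_svr q`. -/
def svrLe (S : CCS Act Const) (p q : Proc Act Const) : Prop :=
  ∀ r, Must S p r → Must S q r

/-- The client testing preorder `r₁ ⊑_clt r₂`. -/
def cltLe (S : CCS Act Const) (r₁ r₂ : Proc Act Const) : Prop :=
  ∀ p, Must S p r₁ → Must S p r₂

/-- The peer testing preorder `p ⊑_p2p q`. -/
def p2pLe (S : CCS Act Const) (p q : Proc Act Const) : Prop :=
  ∀ r, MustSC S p r → MustSC S q r

/-- Weak transition `p ⟹^s q` for finite traces `s ∈ Act*`. -/
inductive Weak (S : CCS Act Const) : Proc Act Const → List Act → Proc Act Const → Prop where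
  | refl (p : Proc Act Const) : Weak S p [] p
  | tau {p p' q : Proc Act Const} {s : List Act} :
      Step S p .tau p' → Weak S p' s q → Weak S p s q
  | act {p p' q : Proc Act Const} {a : Act} {s : List Act} :
      Step S p (.act a) p' → Weak S p' s q → Weak S p (a :: s) q

/-- Unsuccessful weak transition `p ⟹̸✓^s q`: as `Weak` but no state passed through
(including the end points) can report success. -/
inductive UWeak (S : CCS Act Const) : Proc Act Const → List Act → Proc Act Const → Prop where
  | refl {p : Proc Act Const} : ¬ CanOk S p → UWeak S p [] p
  | tau {p p' q : Proc Act Const} {s : List Act} :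
      ¬ CanOk S p → Step S p .tau p' → UWeak S p' s q → UWeak S p s q
  | act {p p' q : Proc Act Const} {a : Act} {s : List Act} :
      ¬ CanOk S p → Step S p (.act a) p' → UWeak S p' s q → UWeak S p (a :: s) q

/-- View `Option Act` (`none` = τ) as a label. -/
def optLabel : Option Act → Label Act
  | some a => .act a
  | none => .tau

/-- The length-`n` prefix of an infinite trace `u ∈ Act^∞`. -/
def prefixList (u : ℕ → Act) (n : ℕ) : List Act := List.ofFn fun i : Fin n => u i.1

/-- Infinite weak transition `p ⟹^u` for `u ∈ Act^∞`. -/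
def InfWeak (S : CCS Act Const) (p : Proc Act Const) (u : ℕ → Act) : Prop :=
  ∃ (ρ : ℕ → Proc Act Const) (ℓ : ℕ → Option Act),
    ρ 0 = p ∧ (∀ k, Step S (ρ k) (optLabel (ℓ k)) (ρ (k + 1))) ∧
    ∀ n, ∃ k, (List.range k).filterMap ℓ = prefixList u n

/-- Infinite unsuccessful weak transition `p ⟹̸✓^u` for `u ∈ Act^∞`. -/
def InfUWeak (S : CCS Act Const) (p : Proc Act Const) (u : ℕ → Act) : Prop :=
  ∃ (ρ : ℕ → Proc Act Const) (ℓ : ℕ → Option Act),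
    ρ 0 = p ∧ (∀ k, Step S (ρ k) (optLabel (ℓ k)) (ρ (k + 1))) ∧
    (∀ k, ¬ CanOk S (ρ k)) ∧
    ∀ n, ∃ k, (List.range k).filterMap ℓ = prefixList u n

/-- `p ⇓`: no infinite sequence of τ-transitions from `p`. -/
def Conv (S : CCS Act Const) (p : Proc Act Const) : Prop :=
  ¬ ∃ ρ : ℕ → Proc Act Const, ρ 0 = p ∧ ∀ k, Step S (ρ k) .tau (ρ (k + 1))

/-- `p after s`. -/
def after (S : CCS Act Const) (p : Proc Act Const) (s : List Act) : Set (Proc Act Const) :=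
  {q | Weak S p s q}

/-- `p afterU s`: residuals after unsuccessful traces. -/
def afterU (S : CCS Act Const) (p : Proc Act Const) (s : List Act) : Set (Proc Act Const) :=
  {q | UWeak S p s q}

-- `⊕X = Σ_{x∈X} τ.x` for a nonempty countable set `X` (junk value otherwise).
open scoped Classical in
noncomputable def bigOplus (X : Set (Proc Act Const)) : Proc Act Const :=
  if h : ∃ f : ℕ → Proc Act Const, Set.range f = X then
    Proc.sum fun n => some (.pre none (h.choose n))
  else Proc.nil

/-- The ready set `S(q)`. -/
def ready (S : CCS Act Const) (q : Proc Act Const) : Set Act :=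
  {a | ∃ q', Step S q (.act a) q'}

/-- The acceptance set `A(p, s)`. -/
def acc (S : CCS Act Const) (p : Proc Act Const) (s : List Act) : Set (Set Act) :=
  {A | ∃ q, Weak S p s q ∧ Stable S q ∧ A = ready S q}

/-- The unsuccessful acceptance set `A✗(p, s)`. -/
def accU (S : CCS Act Const) (p : Proc Act Const) (s : List Act) : Set (Set Act) :=
  {A | ∃ q, UWeak S p s q ∧ Stable S q ∧ A = ready S q}

/-- The usable clients. -/
def Uclt (S : CCS Act Const) : Set (Proc Act Const) := {r | ∃ p, Must S p r}

/-- The usable servers. -/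
def Usvr (S : CCS Act Const) : Set (Proc Act Const) := {p | ∃ r, Must S p r}

/-- Client usability along an unsuccessful trace: `r ⇓U s`. -/
def usbU (S : CCS Act Const) : Proc Act Const → List Act → Prop
  | r, [] => r ∈ Uclt S
  | r, a :: s => r ∈ Uclt S ∧ ((∃ q, UWeak S r [a] q) → usbU S (bigOplus (afterU S r [a])) s)

/-- Client usability along an infinite trace. -/
def usbUInf (S : CCS Act Const) (r : Proc Act Const) (u : ℕ → Act) : Prop :=
  ∀ n, usbU S r (prefixList u n)

/-- Usable actions of a client after `s`: `uaU(r, s)`. -/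
def uaU (S : CCS Act Const) (r : Proc Act Const) (s : List Act) : Set Act :=
  {a | (∃ q, UWeak S r (s ++ [a]) q) → usbU S r (s ++ [a])}

/-- Convergence along a trace: `p ⇓ s`. -/
def convAlong (S : CCS Act Const) : Proc Act Const → List Act → Prop
  | p, [] => Conv S p
  | p, a :: s => Conv S p ∧ ((∃ q, Weak S p [a] q) → convAlong S (bigOplus (after S p [a])) s)

/-- Server usability along a trace: `p ⇓U' s`. -/
def usbS (S : CCS Act Const) : Proc Act Const → List Act → Prop
  | p, [] => p ∈ Usvr S
  | p, a :: s => p ∈ Usvr S ∧ ((∃ q, Weak S p [a] q) → usbS S (bigOplus (after S p [a])) s)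

/-- Server convergence `p ⇓svr s`. -/
def convS (S : CCS Act Const) (p : Proc Act Const) (s : List Act) : Prop :=
  convAlong S p s ∧ usbS S p s

/-- Server convergence along an infinite trace. -/
def convSInf (S : CCS Act Const) (p : Proc Act Const) (u : ℕ → Act) : Prop :=
  ∀ n, convS S p (prefixList u n)

/-- Usable actions of a server after `s`: `uaS(p, s)`. -/
def uaS (S : CCS Act Const) (p : Proc Act Const) (s : List Act) : Set Act :=
  {a | (∃ q, Weak S p s q) → usbS S p (s ++ [a])}

/-- Peer convergence `p ⇓p2p s`. -/
def convP (S : CCS Act Const) (p : Proc Act Const) (s : List Act) : Prop :=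
  convAlong S p s ∧ usbU S p s

/-- Peer convergence along an infinite trace. -/
def convPInf (S : CCS Act Const) (p : Proc Act Const) (u : ℕ → Act) : Prop :=
  ∀ n, convP S p (prefixList u n)

/-- The semantic client preorder `r₁ ≼_clt r₂`. -/
def semClt (S : CCS Act Const) (r₁ r₂ : Proc Act Const) : Prop :=
  (∀ s : List Act, usbU S r₁ s →
    usbU S r₂ s ∧ ∀ B ∈ accU S r₂ s, ∃ A ∈ accU S r₁ s, A ∩ uaU S r₁ s ⊆ B) ∧
  (∀ s : List Act, usbU S r₁ s → (∃ q, UWeak S r₂ s q) → ∃ q, UWeak S r₁ s q) ∧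
  (∀ u : ℕ → Act, usbUInf S r₁ u → InfUWeak S r₂ u → InfUWeak S r₁ u)

/-- The semantic server preorder `p ≼_svr q`. -/
def semSvr (S : CCS Act Const) (p q : Proc Act Const) : Prop :=
  (∀ s : List Act, convS S p s →
    convS S q s ∧ ∀ B ∈ acc S q s, ∃ A ∈ acc S p s, A ∩ uaS S p s ⊆ B) ∧
  (∀ s : List Act, convS S p s → (∃ q', Weak S q s q') → ∃ p', Weak S p s p') ∧
  (∀ u : ℕ → Act, convSInf S p u → InfWeak S q u → InfWeak S p u)

/-- The auxiliary semantic peer relation `p ≼'_p2p q`. -/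
def semP2pAux (S : CCS Act Const) (p q : Proc Act Const) : Prop :=
  (∀ s : List Act, convP S p s →
    convAlong S q s ∧ ∀ B ∈ acc S q s, ∃ A ∈ acc S p s, A ∩ uaU S p s ⊆ B) ∧
  (∀ s : List Act, convP S p s → (∃ q', Weak S q s q') → ∃ p', Weak S p s p') ∧
  (∀ u : ℕ → Act, convPInf S p u → InfWeak S q u → InfWeak S p u)

/-- The semantic peer preorder `p ≼_p2p q`. -/
def semP2p (S : CCS Act Const) (p q : Proc Act Const) : Prop :=
  semClt S p q ∧ semP2pAux S p q

end MTP

/-!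
Residuals along unsuccessful traces are reached through countably branching transitions, so
`⊕(r afterU s)` is a genuine internal choice. The key fact is that `p Must r` implies `p Must ⊕X`
whenever every `x` in the nonempty countable set `X` is reached from `r` by unsuccessful τ-steps:
a computation of `p ∥ ⊕X` either never moves the client, and then its server steps also form an
unsuccessful computation against `r`, or moves it once to some `x ∈ X`, which the server reached
so far must-passes. As `r afterU (a·t) ⊆ ⊕(r afterU a) afterU t`, induction along the trace turns
the server supplied by `⊕(r afterU a) ⇓U t` into one for `⊕(r afterU (a·t))`, and `⇓U` is closed
under prefixes.
-/

theorem Relation.countable_setOf_reflTransGen {α : Type*} {R : α → α → Prop}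
    (hR : ∀ a, {b | R a b}.Countable) (a : α) :
    {b | Relation.ReflTransGen R a b}.Countable := by
  let reach : ℕ → Set α := fun n => (fun s => ⋃ x ∈ s, {b | R x b})^[n] {a}
  have hreach : ∀ n, (reach n).Countable := by
    intro n
    induction n with
    | zero => exact Set.countable_singleton a
    | succ n ih =>
      simp only [reach, Function.iterate_succ_apply']
      exact ih.biUnion fun x _ => hR x
  refine (Set.countable_iUnion hreach).mono fun b hb => ?_
  induction hb with
  | refl => exact Set.mem_iUnion.2 ⟨0, rfl⟩
  | tail _ hbc ih =>
    obtain ⟨n, hn⟩ := Set.mem_iUnion.1 ih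
    refine Set.mem_iUnion.2 ⟨n + 1, ?_⟩
    simp only [reach, Function.iterate_succ_apply']
    exact Set.mem_biUnion hn hbc

namespace MTP

variable {Act Const : Type} {S : CCS Act Const}

/-- A derivation of a transition is determined by the summand indices chosen along it (plus a
dummy index per constant unfolding), so every process has countably many successors. -/
def stepOf (S : CCS Act Const) : Proc Act Const → List ℕ → Option (Label Act × Proc Act Const)
  | .one, [] => some (.ok, .nil)
  | .pre (some a) p, [] => some (.act a, p)
  | .pre none p, [] => some (.tau, p)
  | .sum f, i :: cs => (f i).bind fun q => stepOf S q cs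
  | .const A, _ :: cs => stepOf S (S.defn A) cs
  | _, _ => none

theorem Step.exists_stepOf_eq {p q : Proc Act Const} {l : Label Act} (h : Step S p l q) :
    ∃ cs, stepOf S p cs = some (l, q) := by
  induction h with
  | one | preAct | preTau => exact ⟨[], rfl⟩
  | @sum _ i _ _ _ hf _ ih =>
    obtain ⟨cs, hcs⟩ := ih
    exact ⟨i :: cs, by simp [stepOf, hf, hcs]⟩
  | const _ ih =>
    obtain ⟨cs, hcs⟩ := ih
    exact ⟨0 :: cs, hcs⟩

theorem countable_setOf_step (S : CCS Act Const) (p : Proc Act Const) :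
    {q | ∃ l, Step S p l q}.Countable := by
  refine (Set.countable_range fun cs => ((stepOf S p cs).map Prod.snd).getD p).mono ?_
  rintro q ⟨l, h⟩
  obtain ⟨cs, hcs⟩ := h.exists_stepOf_eq
  exact ⟨cs, by simp [hcs]⟩

theorem UWeak.reflTransGen {p q : Proc Act Const} {s : List Act} (h : UWeak S p s q) :
    Relation.ReflTransGen (fun a b => ∃ l, Step S a l b) p q := by
  induction h with
  | refl => exact .refl
  | tau _ hstep _ ih => exact .head ⟨_, hstep⟩ ih
  | act _ hstep _ ih => exact .head ⟨_, hstep⟩ ih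

theorem afterU_countable (r : Proc Act Const) (s : List Act) : (afterU S r s).Countable :=
  (Relation.countable_setOf_reflTransGen (countable_setOf_step S) r).mono
    fun _ hq => UWeak.reflTransGen hq

theorem UWeak.not_canOk {p q : Proc Act Const} {s : List Act} (h : UWeak S p s q) :
    ¬ CanOk S p := by
  cases h <;> assumption

theorem UWeak.not_canOk_target {p q : Proc Act Const} {s : List Act} (h : UWeak S p s q) :
    ¬ CanOk S q := by
  induction h with
  | refl h => exact h
  | tau _ _ _ ih | act _ _ _ ih => exact ih

theorem UWeak.exists_of_cons {r q : Proc Act Const} {a : Act} {t : List Act}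
    (h : UWeak S r (a :: t) q) : ∃ x, UWeak S r [a] x ∧ UWeak S x t q := by
  generalize hs : a :: t = s at h
  induction h with
  | refl => cases hs
  | tau hno hstep _ ih =>
    obtain ⟨x, hrx, hxq⟩ := ih hs
    exact ⟨x, .tau hno hstep hrx, hxq⟩
  | act hno hstep hrest =>
    cases hs
    exact ⟨_, .act hno hstep (.refl hrest.not_canOk), hrest⟩

section bigOplus

variable {X : Set (Proc Act Const)}

theorem step_bigOplus_iff (hX : X.Countable) (hne : X.Nonempty) {l : Label Act}
    {q : Proc Act Const} : Step S (bigOplus X) l q ↔ l = .tau ∧ q ∈ X := by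
  have hE : ∃ f : ℕ → Proc Act Const, Set.range f = X :=
    let ⟨f, hf⟩ := hX.exists_eq_range hne
    ⟨f, hf.symm⟩
  unfold bigOplus
  rw [dif_pos hE]
  constructor
  · intro h
    cases h with
    | @sum _ i _ _ _ hi hstep =>
      cases Option.some.inj hi
      cases hstep
      exact ⟨rfl, hE.choose_spec.subset (Set.mem_range_self i)⟩
  · rintro ⟨rfl, hq⟩
    obtain ⟨i, rfl⟩ := hE.choose_spec.symm.subset hq
    exact .sum (i := i) rfl (.preTau _)

theorem not_canOk_bigOplus (hX : X.Countable) (hne : X.Nonempty) : ¬ CanOk S (bigOplus X) :=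
  fun ⟨_, h⟩ => nomatch ((step_bigOplus_iff hX hne).1 h).1

theorem UWeak.bigOplus_of_mem (hX : X.Countable) {x q : Proc Act Const} {s : List Act}
    (hx : x ∈ X) (h : UWeak S x s q) : UWeak S (bigOplus X) s q :=
  .tau (not_canOk_bigOplus hX ⟨x, hx⟩) ((step_bigOplus_iff hX ⟨x, hx⟩).2 ⟨rfl, hx⟩) h

theorem ParTau.of_snd_eq_bigOplus (hX : X.Countable) (hne : X.Nonempty)
    {st st' : Proc Act Const × Proc Act Const} (h : ParTau S st st')
    (hst : st.2 = bigOplus X) :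
    (Step S st.1 .tau st'.1 ∧ st'.2 = st.2) ∨ (st'.1 = st.1 ∧ st'.2 ∈ X) := by
  cases h with
  | left hstep => exact .inl ⟨hstep, rfl⟩
  | right hstep =>
    dsimp only at hst
    subst hst
    exact .inr ⟨rfl, ((step_bigOplus_iff hX hne).1 hstep).2⟩
  | sync _ hstep =>
    dsimp only at hst
    subst hst
    exact nomatch ((step_bigOplus_iff hX hne).1 hstep).1

end bigOplus

theorem afterU_cons_subset (r : Proc Act Const) (a : Act) (t : List Act) :
    afterU S r (a :: t) ⊆ afterU S (bigOplus (afterU S r [a])) t := fun _ hq =>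
  let ⟨_, hx, hxq⟩ := UWeak.exists_of_cons hq
  hxq.bigOplus_of_mem (afterU_countable r [a]) hx

theorem MaxComp.shift {ρ : ℕ → Proc Act Const × Proc Act Const} (hρ : MaxComp S ρ) (n : ℕ) :
    MaxComp S fun k => ρ (k + n) := fun k => by
  simpa only [Nat.add_right_comm k 1 n] using hρ (k + n)

theorem Must.exists_canOk {ρ : ℕ → Proc Act Const × Proc Act Const} (hρ : MaxComp S ρ) {n : ℕ}
    (h : Must S (ρ n).1 (ρ n).2) : ∃ k, CanOk S (ρ k).2 :=
  let ⟨k, hk⟩ := h (fun k => ρ (k + n)) (by simp) (hρ.shift n)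
  ⟨k + n, hk⟩

theorem Must.of_parTau {p r p' r' : Proc Act Const} (h : Must S p r)
    (hstep : ParTau S (p, r) (p', r')) (hok : CanOk S r → CanOk S r') : Must S p' r' := by
  intro ρ h0 hρ
  let ρ' : ℕ → Proc Act Const × Proc Act Const := fun
    | 0 => (p, r)
    | k + 1 => ρ k
  obtain ⟨_ | k, hk⟩ := h ρ' rfl fun
    | 0 => .inl (show ParTau S (p, r) (ρ 0) from h0 ▸ hstep)
    | k + 1 => hρ k
  · exact ⟨0, h0 ▸ hok hk⟩
  · exact ⟨k, hk⟩

theorem Must.of_uweak_nil {p r x : Proc Act Const} (h : Must S p r) (hx : UWeak S r [] x) :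
    Must S p x := by
  generalize hs : ([] : List Act) = s at hx
  induction hx with
  | refl => exact h
  | tau hno hstep _ ih => exact ih (h.of_parTau (.right hstep) fun hok => absurd hok hno) hs
  | act => cases hs

theorem Must.bigOplus_of_uweak {p r : Proc Act Const} {X : Set (Proc Act Const)} (h : Must S p r)
    (hr : ¬ CanOk S r) (hX : X.Countable) (hne : X.Nonempty)
    (hreach : ∀ x ∈ X, UWeak S r [] x) : Must S p (bigOplus X) := by
  intro ρ h0 hρ
  by_contra hfail
  obtain ⟨x₀, hx₀⟩ := hne
  have hserver : ∀ k, (ρ k).2 = bigOplus X → Must S (ρ k).1 r →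
      Step S (ρ k).1 .tau (ρ (k + 1)).1 ∧ (ρ (k + 1)).2 = bigOplus X := by
    intro k hk hMk
    rcases hρ k with hstep | ⟨hstuck, -⟩
    · rcases hstep.of_snd_eq_bigOplus hX ⟨x₀, hx₀⟩ hk with ⟨hstep, hsnd⟩ | ⟨hfst, hx⟩
      · exact ⟨hstep, hsnd.trans hk⟩
      · have hMx : Must S (ρ (k + 1)).1 (ρ (k + 1)).2 := hfst ▸ hMk.of_uweak_nil (hreach _ hx)
        exact absurd (hMx.exists_canOk hρ) hfail
    · exact absurd ⟨_, .right (hk ▸ (step_bigOplus_iff hX ⟨x₀, hx₀⟩).2 ⟨rfl, hx₀⟩)⟩ hstuck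
  have hinv : ∀ k, (ρ k).2 = bigOplus X ∧ Must S (ρ k).1 r := by
    intro k
    induction k with
    | zero => exact h0 ▸ ⟨rfl, h⟩
    | succ k ih =>
      obtain ⟨hstep, hsnd⟩ := hserver k ih.1 ih.2
      exact ⟨hsnd, ih.2.of_parTau (.left hstep) id⟩
  obtain ⟨k, hk⟩ := h (fun k => ((ρ k).1, r)) (by simp [h0])
    fun k => .inl (.left (hserver k (hinv k).1 (hinv k).2).1)
  exact hr hk

theorem Must.bigOplus_of_subset {p : Proc Act Const} {X Y : Set (Proc Act Const)}
    (h : Must S p (bigOplus Y)) (hY : Y.Countable) (hXY : X ⊆ Y) (hne : X.Nonempty)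
    (hX : ∀ x ∈ X, ¬ CanOk S x) : Must S p (bigOplus X) :=
  h.bigOplus_of_uweak (not_canOk_bigOplus hY (hne.mono hXY)) (hY.mono hXY) hne
    fun x hx => (UWeak.refl (hX x hx)).bigOplus_of_mem hY (hXY hx)

theorem usbU.mem_Uclt {r : Proc Act Const} {s : List Act} (h : usbU S r s) : r ∈ Uclt S := by
  cases s with
  | nil => exact h
  | cons => exact h.1

theorem usbU.of_prefix {r : Proc Act Const} {s s' : List Act} (h : usbU S r s)
    (hs' : s' <+: s) : usbU S r s' := by
  induction s generalizing r s' with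
  | nil => exact List.prefix_nil.1 hs' ▸ h
  | cons a t ih =>
    cases s' with
    | nil => exact h.mem_Uclt
    | cons b t' =>
      obtain ⟨rfl, ht'⟩ := List.cons_prefix_cons.1 hs'
      exact ⟨h.1, fun hq => ih (h.2 hq) ht'⟩

theorem usbU.exists_must_bigOplus_afterU {r : Proc Act Const} {s : List Act} (h : usbU S r s)
    (hne : (afterU S r s).Nonempty) : ∃ p, Must S p (bigOplus (afterU S r s)) := by
  induction s generalizing r with
  | nil =>
    obtain ⟨p, hp⟩ := h.mem_Uclt
    obtain ⟨q, hq⟩ := hne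
    exact ⟨p, hp.bigOplus_of_uweak hq.not_canOk (afterU_countable r []) ⟨q, hq⟩ fun _ hx => hx⟩
  | cons a t ih =>
    have hsub := afterU_cons_subset (S := S) r a t
    obtain ⟨x, hx, -⟩ := UWeak.exists_of_cons hne.some_mem
    obtain ⟨p, hp⟩ := ih (h.2 ⟨x, hx⟩) (hne.mono hsub)
    exact ⟨p, hp.bigOplus_of_subset (afterU_countable _ t) hsub hne
      fun _ hy => UWeak.not_canOk_target hy⟩

end MTP

/-- Lemma 5.2: if `r ⇓U s` then for every prefix `s'` of `s` performed
unsuccessfully by `r` there is a server satisfying `⊕(r afterU s')`. -/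
theorem usbU_prefix_residual_usable {Act Const : Type} (S : MTP.CCS Act Const)
    (r : MTP.Proc Act Const) (s : List Act)
    (hUsb : MTP.usbU S r s) :
    ∀ s' : List Act, s' <+: s → (∃ q, MTP.UWeak S r s' q) →
      ∃ p : MTP.Proc Act Const, MTP.Must S p (MTP.bigOplus (MTP.afterU S r s')) :=
  fun _ hs' hq => (hUsb.of_prefix hs').exists_must_bigOplus_afterU hq
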